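/- Let Γ be a group. The unit 1 is an algebraic interior point of the cone Σ²ℂ[Γ] in the real vector space ℂ[Γ]^h, quantitatively: for every a ∈ ℂ[Γ]^h and every real ε ≥ 0 with ε·‖a‖₁ ≤ 1, one has 1 + ε·a ∈ Σ²ℂ[Γ]. In particular, ‖a‖₁·1 − a ∈ Σ²ℂ[Γ] for every a ∈ ℂ[Γ]^h. -/

import Mathlib

noncomputable section

universe u

variable (Γ : Type u) [Group Γ]

/-- The involution of the complex group algebra `ℂ[Γ]`:
`(∑ a_g·g)* = ∑ conj(a_g)·g⁻¹`. -/
def gstar (a : MonoidAlgebra ℂ Γ) : MonoidAlgebra ℂ Γ :=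
  a.coeff.sum fun g c => MonoidAlgebra.single g⁻¹ (starRingEnd ℂ c)

/-- The `ℓ¹`-norm of an element of `ℂ[Γ]`: `‖∑ a_g·g‖₁ = ∑ |a_g|`. -/
def l1norm (a : MonoidAlgebra ℂ Γ) : ℝ :=
  a.coeff.sum fun _ c => ‖c‖

/-- The set `Σ²ℂ[Γ]` of sums of hermitian squares in the group algebra. -/
def SOS : Set (MonoidAlgebra ℂ Γ) :=
  {x | ∃ (n : ℕ) (a : Fin n → MonoidAlgebra ℂ Γ), x = ∑ i, gstar Γ (a i) * a i}

/-- The hermitian elements `ℂ[Γ]^h = {a : a* = a}`. -/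
def herm : Set (MonoidAlgebra ℂ Γ) := {a | gstar Γ a = a}

/-- The augmentation homomorphism `ε : ℂ[Γ] → ℂ`, `∑ a_g·g ↦ ∑ a_g`. -/
def aug : MonoidAlgebra ℂ Γ →ₐ[ℂ] ℂ := MonoidAlgebra.lift ℂ ℂ Γ 1

/-- The augmentation ideal `ω(Γ) = ker ε`. -/
def omega : Set (MonoidAlgebra ℂ Γ) := {a | aug Γ a = 0}

/-- The hermitian part `ω(Γ)^h` of the augmentation ideal. -/
def omegaH : Set (MonoidAlgebra ℂ Γ) := {a | a ∈ omega Γ ∧ gstar Γ a = a}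

/-- `Σ²ω(Γ)`: sums of hermitian squares of elements of the augmentation ideal. -/
def SOSomega : Set (MonoidAlgebra ℂ Γ) :=
  {x | ∃ (n : ℕ) (a : Fin n → MonoidAlgebra ℂ Γ),
    (∀ i, a i ∈ omega Γ) ∧ x = ∑ i, gstar Γ (a i) * a i}

/-- `ω²(Γ)`, the `ℂ`-span of products of two elements of the augmentation ideal. -/
def omegaSq : Set (MonoidAlgebra ℂ Γ) :=
  (Submodule.span ℂ {x : MonoidAlgebra ℂ Γ |
    ∃ a ∈ omega Γ, ∃ b ∈ omega Γ, x = a * b} : Submodule ℂ (MonoidAlgebra ℂ Γ))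

/-- `c(g) = g - 1 ∈ ω(Γ)`. -/
def cE (g : Γ) : MonoidAlgebra ℂ Γ := MonoidAlgebra.of ℂ Γ g - 1

/-- The Laplace operator `Δ(S) = |S| - ∑_{s ∈ S} s` of a finite subset `S ⊆ Γ`. -/
def Delta (S : Finset Γ) : MonoidAlgebra ℂ Γ :=
  (S.card : MonoidAlgebra ℂ Γ) - ∑ s ∈ S, MonoidAlgebra.of ℂ Γ s

/-! For `c = ‖c‖·u` with `‖u‖ = 1` one has `(1 + u·g)*(1 + u·g) = 2 + u·g + ū·g⁻¹`, so
`2‖c‖ + c·g + c̄·g⁻¹` is a nonnegative multiple of a hermitian square. Summing these over the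
support of `a` gives `2‖a‖₁ + a + a* ∈ Σ²ℂ[Γ]`, hence `‖a‖₁ + a ∈ Σ²ℂ[Γ]` for hermitian `a`;
then `1 + ε·a = (1 - ε‖a‖₁)·1 + ε·(‖a‖₁ + a)` with `1 = 1*1`. -/

def SOS.addSubmonoid : AddSubmonoid (MonoidAlgebra ℂ Γ) where
  carrier := SOS Γ
  zero_mem' := ⟨0, Fin.elim0, by simp⟩
  add_mem' := by
    rintro _ _ ⟨n, u, rfl⟩ ⟨m, v, rfl⟩
    exact ⟨n + m, Fin.append u v, by simp [Fin.sum_univ_add]⟩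

section

variable {Γ}

open MonoidAlgebra ComplexConjugate

lemma gstar_single (g : Γ) (c : ℂ) : gstar Γ (single g c) = single g⁻¹ (conj c) :=
  Finsupp.sum_single_index (by simp)

lemma gstar_one : gstar Γ 1 = 1 := by
  simp [one_def, gstar_single]

lemma gstar_add (x y : MonoidAlgebra ℂ Γ) : gstar Γ (x + y) = gstar Γ x + gstar Γ y :=
  Finsupp.sum_add_index' (by simp) (by simp [single_add])

lemma gstar_smul (z : ℂ) (x : MonoidAlgebra ℂ Γ) : gstar Γ (z • x) = conj z • gstar Γ x := by
  rw [gstar, coeff_smul, Finsupp.sum_smul_index' (by simp), gstar, Finsupp.smul_sum]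
  simp [smul_single]

lemma neg_mem_herm {a : MonoidAlgebra ℂ Γ} (ha : a ∈ herm Γ) : -a ∈ herm Γ := by
  change gstar Γ (-a) = -a
  rw [← neg_one_smul ℂ a, gstar_smul, ha, map_neg, map_one]

omit [Group Γ] in
lemma l1norm_nonneg (a : MonoidAlgebra ℂ Γ) : 0 ≤ l1norm Γ a :=
  Finset.sum_nonneg fun _ _ => norm_nonneg _

omit [Group Γ] in
lemma l1norm_neg (a : MonoidAlgebra ℂ Γ) : l1norm Γ (-a) = l1norm Γ a := by
  simp [l1norm, Finsupp.sum_neg_index]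

lemma gstar_mul_self_mem_SOS (b : MonoidAlgebra ℂ Γ) : gstar Γ b * b ∈ SOS Γ :=
  ⟨1, fun _ => b, by simp⟩

lemma one_mem_SOS : (1 : MonoidAlgebra ℂ Γ) ∈ SOS Γ := by
  simpa [gstar_one] using gstar_mul_self_mem_SOS (1 : MonoidAlgebra ℂ Γ)

lemma ofReal_smul_mem_SOS {t : ℝ} (ht : 0 ≤ t) {x : MonoidAlgebra ℂ Γ} (hx : x ∈ SOS Γ) :
    (t : ℂ) • x ∈ SOS Γ := by
  obtain ⟨n, u, rfl⟩ := hx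
  refine ⟨n, fun i => (√t : ℂ) • u i, ?_⟩
  rw [Finset.smul_sum]
  refine Finset.sum_congr rfl fun i _ => ?_
  rw [gstar_smul, Complex.conj_ofReal, smul_mul_smul_comm, ← Complex.ofReal_mul,
    Real.mul_self_sqrt ht]

lemma gstar_mul_self_one_add_single {u : ℂ} (hu : ‖u‖ = 1) (g : Γ) :
    gstar Γ (1 + single g u) * (1 + single g u) = 2 + (single g u + single g⁻¹ (conj u)) := by
  have hunit : single (g⁻¹ * g) (conj u * u) = (1 : MonoidAlgebra ℂ Γ) := by
    rw [inv_mul_cancel, Complex.conj_mul', hu]; simp [one_def]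
  rw [gstar_add, gstar_one, gstar_single, add_mul, mul_add, mul_add, single_mul_single, hunit]
  simp only [one_mul, mul_one]
  rw [← one_add_one_eq_two]
  abel

lemma two_norm_smul_one_add_single_add_single_mem_SOS (g : Γ) (c : ℂ) :
    ((2 * ‖c‖ : ℝ) : ℂ) • (1 : MonoidAlgebra ℂ Γ) + (single g c + single g⁻¹ (conj c))
      ∈ SOS Γ := by
  obtain ⟨u, hu, hc⟩ : ∃ u : ℂ, ‖u‖ = 1 ∧ c = ‖c‖ * u :=
    ⟨_, Complex.norm_exp_ofReal_mul_I _, (Complex.norm_mul_exp_arg_mul_I c).symm⟩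
  convert ofReal_smul_mem_SOS (norm_nonneg c) (gstar_mul_self_mem_SOS (1 + single g u)) using 1
  have hc' : conj c = ‖c‖ * conj u := by
    rw [← Complex.conj_ofReal, ← map_mul, ← hc]
  rw [gstar_mul_self_one_add_single hu, smul_add, smul_add, smul_single', smul_single', ← hc,
    ← hc']
  congr 1
  push_cast
  rw [mul_comm, mul_smul, ofNat_smul_eq_nsmul, nsmul_one, Nat.cast_ofNat]

lemma two_l1norm_smul_one_add_add_gstar_mem_SOS (a : MonoidAlgebra ℂ Γ) :
    ((2 * l1norm Γ a : ℝ) : ℂ) • (1 : MonoidAlgebra ℂ Γ) + (a + gstar Γ a) ∈ SOS Γ := by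
  have hnorm : ((2 * l1norm Γ a : ℝ) : ℂ) • (1 : MonoidAlgebra ℂ Γ)
      = a.coeff.sum fun _ c => ((2 * ‖c‖ : ℝ) : ℂ) • 1 := by
    simp only [l1norm, Finsupp.sum, Finset.mul_sum, Complex.ofReal_sum, Finset.sum_smul]
  have hsplit : ((2 * l1norm Γ a : ℝ) : ℂ) • (1 : MonoidAlgebra ℂ Γ) + (a + gstar Γ a)
      = a.coeff.sum fun g c => ((2 * ‖c‖ : ℝ) : ℂ) • 1 + (single g c + single g⁻¹ (conj c)) := by
    rw [Finsupp.sum_add, Finsupp.sum_add, sum_coeff_single, ← hnorm]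
    rfl
  rw [hsplit]
  exact AddSubmonoidClass.finsuppSum_mem (SOS.addSubmonoid Γ) _ _
    fun g _ => two_norm_smul_one_add_single_add_single_mem_SOS g _

lemma l1norm_smul_one_add_mem_SOS {a : MonoidAlgebra ℂ Γ} (ha : a ∈ herm Γ) :
    (l1norm Γ a : ℂ) • (1 : MonoidAlgebra ℂ Γ) + a ∈ SOS Γ := by
  have h := ofReal_smul_mem_SOS (t := 1 / 2) (by norm_num)
    (two_l1norm_smul_one_add_add_gstar_mem_SOS a)
  rw [ha] at h
  convert h using 1
  push_cast
  module

lemma one_add_smul_mem_SOS {a : MonoidAlgebra ℂ Γ} (ha : a ∈ herm Γ) {ε : ℝ} (hε : 0 ≤ ε)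
    (h : ε * l1norm Γ a ≤ 1) : 1 + (ε : ℂ) • a ∈ SOS Γ := by
  have hsplit : 1 + (ε : ℂ) • a
      = ((1 - ε * l1norm Γ a : ℝ) : ℂ) • 1 + (ε : ℂ) • ((l1norm Γ a : ℂ) • 1 + a) := by
    push_cast
    module
  rw [hsplit]
  exact (SOS.addSubmonoid Γ).add_mem (ofReal_smul_mem_SOS (by linarith) one_mem_SOS)
    (ofReal_smul_mem_SOS hε (l1norm_smul_one_add_mem_SOS ha))

end

/-- **`1` is an algebraic interior point of `Σ²ℂ[Γ]` in `ℂ[Γ]^h`.**  Quantitatively: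
for every hermitian `a` and every real `ε ≥ 0` with `ε·‖a‖₁ ≤ 1` one has
`1 + ε·a ∈ Σ²ℂ[Γ]`.  In particular `1` is an algebraic interior point, and
`‖a‖₁·1 - a ∈ Σ²ℂ[Γ]` for every hermitian `a`. -/
theorem one_algebraic_interior_SOS :
    (∀ a ∈ herm Γ, ∀ ε : ℝ, 0 ≤ ε → ε * l1norm Γ a ≤ 1 →
      1 + (ε : ℂ) • a ∈ SOS Γ) ∧
    (∀ a ∈ herm Γ, ∃ ε : ℝ, 0 < ε ∧ 1 + (ε : ℂ) • a ∈ SOS Γ) ∧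
    (∀ a ∈ herm Γ, ((l1norm Γ a : ℝ) : ℂ) • (1 : MonoidAlgebra ℂ Γ) - a ∈ SOS Γ) := by
  refine ⟨fun a ha ε hε h => one_add_smul_mem_SOS ha hε h, fun a ha => ?_, fun a ha => ?_⟩
  · have hnorm := l1norm_nonneg a
    refine ⟨(l1norm Γ a + 1)⁻¹, by positivity, one_add_smul_mem_SOS ha (by positivity) ?_⟩
    rw [inv_mul_le_one₀ (by positivity)]
    linarith
  · simpa [l1norm_neg, sub_eq_add_neg] using l1norm_smul_one_add_mem_SOS (neg_mem_herm ha)
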